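/- Let α > 0 and suppose φ_1 ∈ H satisfies φ_1(k) > 0 for all k ∈ {1, ..., T} and Σ_{k=1}^{T+1} |φ_1(k) - φ_1(k-1)|^p = λ_{1,p} Σ_{k=1}^{T} φ_1(k)^p, where λ_{1,p} > 0. Suppose there exists δ > 0 such that F_k(ξ) > (λ_{1,p} / (p α)) ξ^p for every k ∈ {1, ..., T} and every ξ ∈ (0, δ). Then for every ζ with 0 < ζ < δ / max_{k ∈ {1,...,T}} φ_1(k), the function θ_ζ := ζ φ_1 satisfies J_α(θ_ζ) := (1/p) Σ_{k=1}^{T+1} |θ_ζ(k) - θ_ζ(k-1)|^p - α Σ_{k=1}^{T} F_k(θ_ζ(k)) < 0. -/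

import Mathlib

/-! Both terms of `J_α(ζ φ₁)` scale like `ζ ^ p`: the gradient term is exactly
`(λ₁ / p) ζ ^ p ∑ φ₁ ^ p` by the eigenvalue equation, while `ζ φ₁(k) < δ` for every `k`, so the
growth hypothesis on `F` makes the potential term strictly larger than `(λ₁ / p) ζ ^ p ∑ φ₁ ^ p`. -/

open Real Finset

theorem sum_abs_mul_sub_mul_rpow {ι : Type*} (s : Finset ι) (u v : ι → ℝ) {c : ℝ} (hc : 0 ≤ c)
    (p : ℝ) : ∑ k ∈ s, |c * u k - c * v k| ^ p = c ^ p * ∑ k ∈ s, |u k - v k| ^ p := by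
  rw [mul_sum]
  refine sum_congr rfl fun k _ => ?_
  rw [← mul_sub, abs_mul, abs_of_nonneg hc, mul_rpow hc (abs_nonneg _)]

section Scaling

variable {ι : Type*} {s : Finset ι} (hs : s.Nonempty) {φ : ι → ℝ} {ζ δ : ℝ}

theorem mul_lt_of_lt_div_sup' (hφ : ∀ k ∈ s, 0 < φ k) (hζ : 0 ≤ ζ) (hζδ : ζ < δ / s.sup' hs φ)
    {k : ι} (hk : k ∈ s) : ζ * φ k < δ := by
  have hle : φ k ≤ s.sup' hs φ := le_sup' φ hk
  have hsup : 0 < s.sup' hs φ := (hφ k hk).trans_le hle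
  calc ζ * φ k ≤ ζ * s.sup' hs φ := mul_le_mul_of_nonneg_left hle hζ
    _ < δ := (lt_div_iff₀ hsup).mp hζδ

theorem mul_sum_rpow_lt_sum_of_lt_div_sup' {G : ι → ℝ → ℝ} {c p : ℝ}
    (hG : ∀ k ∈ s, ∀ ξ ∈ Set.Ioo 0 δ, c * ξ ^ p < G k ξ) (hφ : ∀ k ∈ s, 0 < φ k) (hζ : 0 < ζ)
    (hζδ : ζ < δ / s.sup' hs φ) :
    c * ζ ^ p * ∑ k ∈ s, φ k ^ p < ∑ k ∈ s, G k (ζ * φ k) := by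
  rw [mul_sum]
  refine sum_lt_sum_of_nonempty hs fun k hk => ?_
  have hξ : ζ * φ k ∈ Set.Ioo 0 δ :=
    ⟨mul_pos hζ (hφ k hk), mul_lt_of_lt_div_sup' hs hφ hζ.le hζδ hk⟩
  calc c * ζ ^ p * φ k ^ p = c * (ζ * φ k) ^ p := by
        rw [mul_rpow hζ.le (hφ k hk).le, mul_assoc]
    _ < G k (ζ * φ k) := hG k hk _ hξ

end Scaling

/-- final step of the proof of Theorem `Esistenza2`.  If `φ₁ ∈ H` is
positive on `ℤ[1,T]` with `∑_{k=1}^{T+1} |Δφ₁(k-1)|^p = λ₁ ∑_{k=1}^T φ₁(k)^p`, `λ₁ > 0`,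
`α > 0`, and `F k ξ > (λ₁/(pα)) ξ^p` for all `k ∈ ℤ[1,T]` and `ξ ∈ (0,δ)`, then for every
`ζ ∈ (0, δ / max_k φ₁(k))` the function `θ_ζ = ζ φ₁` satisfies `J_α(θ_ζ) < 0`. -/
theorem energy_negative_along_eigenfunction
    (T : ℕ) (hT : 2 ≤ T) (p : ℝ)
    (F : ℕ → ℝ → ℝ)
    (α : ℝ) (hα : 0 < α)
    (lam : ℝ)
    (φ₁ : ℕ → ℝ)
    (hφ₁pos : ∀ k ∈ Finset.Icc 1 T, 0 < φ₁ k)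
    (hφ₁eq : ∑ k ∈ Finset.Icc 1 (T + 1), |φ₁ k - φ₁ (k - 1)| ^ p =
      lam * ∑ k ∈ Finset.Icc 1 T, (φ₁ k) ^ p)
    (δ : ℝ)
    (hFgt : ∀ k ∈ Finset.Icc 1 T, ∀ ξ ∈ Set.Ioo (0 : ℝ) δ,
      (lam / (p * α)) * ξ ^ p < F k ξ)
    (ζ : ℝ) (hζ0 : 0 < ζ)
    (hζδ : ζ < δ / ((Finset.Icc 1 T).sup' (Finset.nonempty_Icc.mpr (by omega)) φ₁)) :
    (1 / p) * ∑ k ∈ Finset.Icc 1 (T + 1), |ζ * φ₁ k - ζ * φ₁ (k - 1)| ^ p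
      - α * ∑ k ∈ Finset.Icc 1 T, F k (ζ * φ₁ k) < 0 := by
  rw [sum_abs_mul_sub_mul_rpow _ _ _ hζ0.le, hφ₁eq]
  have hpotential := mul_lt_mul_of_pos_left
    (mul_sum_rpow_lt_sum_of_lt_div_sup' _ hFgt hφ₁pos hζ0 hζδ) hα
  have hcoeff : α * (lam / (p * α)) = lam / p := by
    rw [mul_div_assoc', mul_comm p α, mul_div_mul_left lam p hα.ne']
  have hgradient : 1 / p * (ζ ^ p * (lam * ∑ k ∈ Icc 1 T, φ₁ k ^ p))
      = α * (lam / (p * α) * ζ ^ p * ∑ k ∈ Icc 1 T, φ₁ k ^ p) := by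
    linear_combination -(ζ ^ p * ∑ k ∈ Icc 1 T, φ₁ k ^ p) * hcoeff
  linarith
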